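/- Over F_2, under the Frobenius filtration f_t of the symmetric algebra S*(W), each Milnor derivation Q_i is a Φ S*(W)-module map that decreases filtration by exactly one: Q_i(f_t S*(W)) ⊆ f_{t-1} S*(W), and the induced map on filtration quotients Λ^t(W)⊗S*(W) → Λ^{t-1}(W)⊗S*(W) is the Koszul differential τ_i. -/

import Mathlib

open MvPolynomial

/-- The Milnor derivation `Q_i` on the symmetric (polynomial) algebra over `𝔽₂`. -/
noncomputable def Qder (σ : Type) (i : ℕ) :
    Derivation (ZMod 2) (MvPolynomial σ (ZMod 2)) (MvPolynomial σ (ZMod 2)) :=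
  MvPolynomial.mkDerivation (ZMod 2) (fun s => X s ^ 2 ^ (i + 1))

/-- The Frobenius filtration `f_t S^*(W)`: the span of products `m · g²` with `m` homogeneous
of degree at most `t`. -/
noncomputable def frobFilt (σ : Type) (t : ℕ) :
    Submodule (ZMod 2) (MvPolynomial σ (ZMod 2)) :=
  Submodule.span (ZMod 2) {p | ∃ u ≤ t, ∃ m g : MvPolynomial σ (ZMod 2),
    m.IsHomogeneous u ∧ p = m * g ^ 2}

/-- The predecessor filtration stage, with `f_{-1} = 0`. -/
noncomputable def frobFiltPred (σ : Type) : ℕ → Submodule (ZMod 2) (MvPolynomial σ (ZMod 2))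
  | 0 => ⊥
  | (t + 1) => frobFilt σ t

/-! In characteristic 2 every derivation kills squares (`D(g²) = 2g·D g`), so `Q_i` is linear
over the subalgebra of squares. On a monomial, `Q_i(x^v) = Σ_s v_s · x^(v - e_s) · (x_s^(2^i))²`
is a sum of generators of `f_{|v|-1}`, and the Leibniz rule on `∏_{s∈T} x_s` gives `τ_i`. -/

namespace Derivation

section

variable {R A M : Type*} [CommSemiring R] [CommSemiring A] [AddCommMonoid M] [Algebra R A]
  [Module A M] [Module R M] (D : Derivation R A M)

theorem leibniz_finsetProd {ι : Type*} [DecidableEq ι] (T : Finset ι) (f : ι → A) :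
    D (∏ s ∈ T, f s) = ∑ s ∈ T, (∏ u ∈ T.erase s, f u) • D (f s) := by
  induction T using Finset.induction_on with
  | empty => simp
  | insert a T ha ih =>
    rw [Finset.prod_insert ha, leibniz, ih, Finset.sum_insert ha, Finset.erase_insert ha,
      Finset.smul_sum, add_comm]
    congr 1
    refine Finset.sum_congr rfl fun s hs => ?_
    rw [Finset.erase_insert_of_ne (ne_of_mem_of_not_mem hs ha).symm,
      Finset.prod_insert fun h => ha (Finset.mem_of_mem_erase h), mul_smul]

end

theorem map_sq_eq_zero_of_charTwo {R A : Type*} [CommSemiring R] [CommRing A]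
    [Algebra R A] [CharP A 2] (D : Derivation R A A) (g : A) : D (g ^ 2) = 0 := by
  rw [pow_two, D.leibniz, smul_eq_mul]
  exact CharTwo.add_self_eq_zero _

theorem map_sq_mul_of_charTwo {R A : Type*} [CommSemiring R] [CommRing A]
    [Algebra R A] [CharP A 2] (D : Derivation R A A) (g p : A) :
    D (g ^ 2 * p) = g ^ 2 * D p := by
  rw [D.leibniz, D.map_sq_eq_zero_of_charTwo, smul_zero, add_zero, smul_eq_mul]

end Derivation

variable {σ : Type}

theorem frobFilt_mono : Monotone (frobFilt σ) := fun _ _ hts =>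
  Submodule.span_mono fun _ ⟨u, hu, hp⟩ => ⟨u, hu.trans hts, hp⟩

theorem frobFiltPred_mono : Monotone (frobFiltPred σ)
  | 0, _, _ => bot_le
  | _ + 1, _ + 1, hts => frobFilt_mono (Nat.le_of_succ_le_succ hts)

theorem sq_mul_mem_frobFilt {t : ℕ} (g : MvPolynomial σ (ZMod 2)) {p : MvPolynomial σ (ZMod 2)}
    (hp : p ∈ frobFilt σ t) : g ^ 2 * p ∈ frobFilt σ t := by
  induction hp using Submodule.span_induction with
  | mem q hq =>
    obtain ⟨u, hu, m, h, hm, rfl⟩ := hq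
    exact Submodule.subset_span ⟨u, hu, m, g * h, hm, by ring⟩
  | zero => simp
  | add q r _ _ hq hr => rw [mul_add]; exact add_mem hq hr
  | smul c q _ hq => rw [mul_smul_comm]; exact Submodule.smul_mem _ _ hq

theorem sq_mul_mem_frobFiltPred {t : ℕ} (g : MvPolynomial σ (ZMod 2))
    {p : MvPolynomial σ (ZMod 2)} (hp : p ∈ frobFiltPred σ t) : g ^ 2 * p ∈ frobFiltPred σ t := by
  cases t with
  | zero => simp_all [frobFiltPred]
  | succ t => exact sq_mul_mem_frobFilt g hp

variable (i : ℕ)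

theorem Qder_X (s : σ) : Qder σ i (X s) = X s ^ 2 ^ (i + 1) :=
  mkDerivation_X _ _ _

theorem Qder_monomial_mem_frobFiltPred (v : σ →₀ ℕ) (c : ZMod 2) :
    Qder σ i (monomial v c) ∈ frobFiltPred σ v.degree := by
  rw [Qder, mkDerivation_monomial]
  refine Submodule.smul_mem _ _ (Submodule.sum_mem _ fun s hs => ?_)
  have hv : v - Finsupp.single s 1 + Finsupp.single s 1 = v :=
    tsub_add_cancel_of_le (Finsupp.single_le_iff.mpr (Nat.one_le_iff_ne_zero.mpr
      (Finsupp.mem_support_iff.mp hs)))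
  have hdeg : v.degree = (v - Finsupp.single s 1).degree + 1 := by
    conv_lhs => rw [← hv]
    rw [map_add, Finsupp.degree_single]
  rw [hdeg]
  refine Submodule.subset_span ⟨_, le_rfl, monomial (v - Finsupp.single s 1) (v s : ZMod 2),
    X s ^ 2 ^ i, isHomogeneous_monomial _ rfl, ?_⟩
  dsimp only
  rw [smul_eq_mul, ← pow_mul, ← pow_succ]

theorem Qder_mem_frobFiltPred_of_isHomogeneous {u : ℕ} {m : MvPolynomial σ (ZMod 2)}
    (hm : m.IsHomogeneous u) : Qder σ i m ∈ frobFiltPred σ u := by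
  rw [m.as_sum, map_sum]
  refine Submodule.sum_mem _ fun v hv => ?_
  have hdeg : v.degree = u := by
    rw [Finsupp.degree_eq_weight_one]
    exact hm (mem_support_iff.mp hv)
  exact hdeg ▸ Qder_monomial_mem_frobFiltPred i v _

theorem Qder_mem_frobFiltPred {t : ℕ} {p : MvPolynomial σ (ZMod 2)} (hp : p ∈ frobFilt σ t) :
    Qder σ i p ∈ frobFiltPred σ t := by
  induction hp using Submodule.span_induction with
  | mem q hq =>
    obtain ⟨u, hu, m, g, hm, rfl⟩ := hq
    rw [mul_comm, (Qder σ i).map_sq_mul_of_charTwo]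
    exact sq_mul_mem_frobFiltPred g
      (frobFiltPred_mono hu (Qder_mem_frobFiltPred_of_isHomogeneous i hm))
  | zero => simp
  | add q r _ _ hq hr => rw [map_add]; exact add_mem hq hr
  | smul c q _ hq => rw [Derivation.map_smul]; exact Submodule.smul_mem _ _ hq

theorem Qder_prod_X_mul_sq [DecidableEq σ] (T : Finset σ) (g : MvPolynomial σ (ZMod 2)) :
    Qder σ i ((∏ s ∈ T, X s) * g ^ 2) =
      ∑ s ∈ T, (∏ u ∈ T.erase s, X u) * (X s ^ 2 ^ i * g) ^ 2 := by
  rw [mul_comm, (Qder σ i).map_sq_mul_of_charTwo, Derivation.leibniz_finsetProd, Finset.mul_sum]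
  refine Finset.sum_congr rfl fun s _ => ?_
  rw [Qder_X, smul_eq_mul, mul_pow, ← pow_mul, ← pow_succ]
  ring

theorem stmt14_general (σ : Type) [DecidableEq σ] (i : ℕ) :
    (∀ g p : MvPolynomial σ (ZMod 2), Qder σ i (g ^ 2 * p) = g ^ 2 * Qder σ i p) ∧
    (∀ t : ℕ, ∀ p ∈ frobFilt σ t, Qder σ i p ∈ frobFiltPred σ t) ∧
    (∀ (T : Finset σ) (g : MvPolynomial σ (ZMod 2)),
      Qder σ i ((∏ s ∈ T, X s) * g ^ 2) =
        ∑ s ∈ T, (∏ u ∈ T.erase s, X u) * (X s ^ 2 ^ i * g) ^ 2) :=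
  ⟨(Qder σ i).map_sq_mul_of_charTwo, fun _ _ => Qder_mem_frobFiltPred i,
    Qder_prod_X_mul_sq i⟩

/-- Over `𝔽₂`: the Milnor derivation `Q_i` is `Φ S^*(W)`-linear, decreases the Frobenius
filtration by exactly one, and the induced map on filtration quotients
`Λ^t(W) ⊗ S^*(W) → Λ^(t-1)(W) ⊗ S^*(W)` is the Koszul differential `τ_i`: on the
generators `x_1⋯x_t·g²` of `f_t` it is given by
`Q_i((∏_{s∈T} x_s)·g²) = Σ_{s∈T} (∏_{u∈T∖s} x_u)·(x_s^(2^i)·g)²`. -/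
theorem stmt14 (σ : Type) [Fintype σ] [DecidableEq σ] (i : ℕ) :
    (∀ g p : MvPolynomial σ (ZMod 2), Qder σ i (g ^ 2 * p) = g ^ 2 * Qder σ i p) ∧
    (∀ t : ℕ, ∀ p ∈ frobFilt σ t, Qder σ i p ∈ frobFiltPred σ t) ∧
    (∀ (T : Finset σ) (g : MvPolynomial σ (ZMod 2)),
      Qder σ i ((∏ s ∈ T, X s) * g ^ 2) =
        ∑ s ∈ T, (∏ u ∈ T.erase s, X u) * (X s ^ 2 ^ i * g) ^ 2) :=
  stmt14_general σ i
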